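/- For every intermediately normalized wavefunction Ψ ∈ ℋ (i.e. ⟨Ψ, Φ_0⟩ = 1) there exists a unique cluster operator C ∈ 𝔟 such that Ψ = (id_ℋ + C) Φ_0. -/

import Mathlib

set_option synthInstance.maxHeartbeats 1000000
set_option maxHeartbeats 1000000

namespace CC

abbrev FockSpace (K : ℕ) := (Fin K → Bool) → ℝ

noncomputable def eVec (K : ℕ) (k : Fin K → Bool) : FockSpace K := Pi.single k 1

def nTrue (K : ℕ) (k : Fin K → Bool) : ℕ :=
  (Finset.univ.filter fun j => k j = true).card

def sgn (K : ℕ) (i : Fin K) (k : Fin K → Bool) : ℝ :=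
  (-1 : ℝ) ^ (Finset.univ.filter fun j => j < i ∧ k j = true).card

noncomputable def creOp (K : ℕ) (i : Fin K) : Module.End ℝ (FockSpace K) where
  toFun f := fun m =>
    if m i = true then
      sgn K i (Function.update m i false) * f (Function.update m i false)
    else 0
  map_add' f g := by
    funext m
    by_cases h : m i = true <;> simp [h, mul_add]
  map_smul' c f := by
    funext m
    by_cases h : m i = true <;> simp [h] <;> ring

noncomputable def annOp (K : ℕ) (i : Fin K) : Module.End ℝ (FockSpace K) where
  toFun f := fun m =>
    if m i = true then 0
    else sgn K i m * f (Function.update m i true)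
  map_add' f g := by
    funext m
    by_cases h : m i = true <;> simp [h, mul_add]
  map_smul' c f := by
    funext m
    by_cases h : m i = true <;> simp [h] <;> ring

structure ExIdx (K N : ℕ) where
  r : ℕ
  r_pos : 1 ≤ r
  r_le : r ≤ N
  occ : Fin r → Fin K
  vir : Fin r → Fin K
  occ_mono : StrictMono occ
  vir_mono : StrictMono vir
  occ_lt : ∀ j, ((occ j : Fin K) : ℕ) < N
  vir_ge : ∀ j, N ≤ ((vir j : Fin K) : ℕ)

noncomputable def excOp (K N : ℕ) (μ : ExIdx K N) : Module.End ℝ (FockSpace K) :=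
  (List.ofFn fun j => creOp K (μ.vir j)).prod *
    ((List.ofFn fun j => annOp K (μ.occ j)).reverse).prod

noncomputable def dexcOp (K N : ℕ) (μ : ExIdx K N) : Module.End ℝ (FockSpace K) :=
  (List.ofFn fun j => creOp K (μ.occ j)).prod *
    ((List.ofFn fun j => annOp K (μ.vir j)).reverse).prod

noncomputable def Hspace (K N : ℕ) : Submodule ℝ (FockSpace K) :=
  Submodule.span ℝ {f | ∃ k : Fin K → Bool, nTrue K k = N ∧ f = eVec K k}

def refOcc (K N : ℕ) : Fin K → Bool := fun j => decide ((j : ℕ) < N)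

noncomputable def refVec (K N : ℕ) : FockSpace K := eVec K (refOcc K N)

abbrev ExcInvariant (K N : ℕ) : Prop :=
  ∀ μ : ExIdx K N, ∀ x ∈ Hspace K N, excOp K N μ x ∈ Hspace K N

noncomputable def excResL (K N : ℕ) (hX : ExcInvariant K N) (μ : ExIdx K N) :
    Hspace K N →L[ℝ] Hspace K N :=
  LinearMap.toContinuousLinearMap ((excOp K N μ).restrict (hX μ))

noncomputable def clusterSpace (K N : ℕ) (hX : ExcInvariant K N) :
    Submodule ℝ (Hspace K N →L[ℝ] Hspace K N) :=
  Submodule.span ℝ (Set.range (excResL K N hX))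

noncomputable def Gset (K N : ℕ) (hX : ExcInvariant K N) :
    Set (Hspace K N →L[ℝ] Hspace K N) :=
  {G | ∃ C ∈ clusterSpace K N hX, G = 1 + C}

noncomputable def ip (K : ℕ) (f g : FockSpace K) : ℝ :=
  ∑ k : Fin K → Bool, f k * g k

lemma nTrue_refOcc (K N : ℕ) (h : N ≤ K) : nTrue K (refOcc K N) = N := by
  unfold nTrue refOcc
  have : (Finset.univ.filter fun j : Fin K => decide ((j : ℕ) < N) = true)
      = Finset.map (Fin.castLEEmb h) Finset.univ := by
    ext j
    simp only [Finset.mem_filter, Finset.mem_univ, true_and, decide_eq_true_eq,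
      Finset.mem_map, Fin.castLEEmb_apply]
    constructor
    · intro hj
      exact ⟨⟨(j : ℕ), hj⟩, by ext; simp⟩
    · rintro ⟨i, -, rfl⟩
      simpa using i.isLt
  rw [this]
  simp

lemma refVec_mem (K N : ℕ) (h : N ≤ K) : refVec K N ∈ Hspace K N :=
  Submodule.subset_span ⟨refOcc K N, nTrue_refOcc K N h, rfl⟩

noncomputable def refState (K N : ℕ) (h : N ≤ K) : Hspace K N :=
  ⟨refVec K N, refVec_mem K N h⟩

noncomputable instance instTopRingCLM (K N : ℕ) :
    IsTopologicalRing (Hspace K N →L[ℝ] Hspace K N) := by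
  exact @NonUnitalSeminormedRing.toIsTopologicalRing (Hspace K N →L[ℝ] Hspace K N) _

noncomputable def expE (K N : ℕ) (T : Hspace K N →L[ℝ] Hspace K N) :
    Hspace K N →L[ℝ] Hspace K N :=
  NormedSpace.exp T


lemma eVec_apply (K : ℕ) (k m : Fin K → Bool) : eVec K k m = if m = k then 1 else 0 :=
  Pi.single_apply k 1 m

lemma creOp_eVec (K : ℕ) (i : Fin K) (k : Fin K → Bool) :
    creOp K i (eVec K k) = if k i = true then 0 else sgn K i k • eVec K (Function.update k i true) := by
  funext m
  show (if m i = true then sgn K i (Function.update m i false) * eVec K k (Function.update m i false) else 0) = _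
  by_cases hk : k i = true
  · simp only [hk, if_true]
    by_cases hm : m i = true
    · have : Function.update m i false ≠ k := by
        intro h; have := congrFun h i; simp [hk] at this
      simp [hm, eVec_apply, this]
    · simp [hm]
  · simp only [hk, if_false]
    by_cases hm : m i = true
    · simp only [hm, if_true]
      by_cases he : m = Function.update k i true
      · subst he
        have h1 : Function.update (Function.update k i true) i false = k := by
          funext x; by_cases hx : x = i
          · subst hx; simp [Bool.eq_false_iff.mpr hk]
          · simp [Function.update, hx]
        rw [h1]
        simp [eVec_apply, Pi.smul_apply]
      · have h2 : Function.update m i false ≠ k := by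
          intro h
          apply he
          funext x; by_cases hx : x = i
          · subst hx; simp [hm]
          · have := congrFun h x; simp [Function.update, hx] at this ⊢; exact this
        simp [eVec_apply, h2, Pi.smul_apply, he]
    · have h3 : m ≠ Function.update k i true := by
        intro h; apply hm; rw [h]; simp
      simp [hm, eVec_apply, h3, Pi.smul_apply]

lemma annOp_eVec (K : ℕ) (i : Fin K) (k : Fin K → Bool) :
    annOp K i (eVec K k) = if k i = true then
      sgn K i (Function.update k i false) • eVec K (Function.update k i false) else 0 := by
  funext m
  show (if m i = true then 0 else sgn K i m * eVec K k (Function.update m i true)) = _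
  by_cases hk : k i = true
  · simp only [hk, if_true]
    by_cases hm : m i = true
    · have h3 : m ≠ Function.update k i false := by
        intro h; have := congrFun h i; simp [hm] at this
      simp [hm, eVec_apply, h3, Pi.smul_apply]
    · by_cases he : m = Function.update k i false
      · subst he
        have h1 : Function.update (Function.update k i false) i true = k := by
          funext x; by_cases hx : x = i
          · subst hx; simp [hk]
          · simp [Function.update, hx]
        simp [hm, h1, eVec_apply, Pi.smul_apply]
      · have h2 : Function.update m i true ≠ k := by
          intro h
          apply he
          funext x; by_cases hx : x = i
          · subst hx; simp [Bool.eq_false_iff.mpr hm]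
          · have := congrFun h x; simp [Function.update, hx] at this ⊢; exact this
        simp [hm, eVec_apply, h2, Pi.smul_apply, he]
  · simp only [hk, if_false]
    by_cases hm : m i = true
    · simp [hm]
    · have h2 : Function.update m i true ≠ k := by
        intro h; have := congrFun h i; simp [hk] at this
      simp [hm, eVec_apply, h2]

lemma sgn_pm (K : ℕ) (i : Fin K) (k : Fin K → Bool) : sgn K i k = 1 ∨ sgn K i k = -1 :=
  neg_one_pow_eq_or ℝ _

lemma ann_chain (K : ℕ) : ∀ (r : ℕ) (f : Fin r → Fin K), Function.Injective f →
    ∀ (k : Fin K → Bool), (∀ j, k (f j) = true) →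
    ∃ ε : ℝ, (ε = 1 ∨ ε = -1) ∧
      ((List.ofFn fun j => annOp K (f j)).reverse).prod (eVec K k)
        = ε • eVec K (fun m => if m ∈ Finset.image f Finset.univ then false else k m) := by
  intro r
  induction r with
  | zero =>
    intro f _ k _
    refine ⟨1, Or.inl rfl, ?_⟩
    have hstate : (fun m => if m ∈ Finset.image f Finset.univ then false else k m) = k := by
      funext m; simp
    simp [hstate]
  | succ r ih =>
    intro f hf k hk
    have h0 : k (f 0) = true := hk 0
    have hinj' : Function.Injective (fun j : Fin r => f j.succ) :=
      fun a b h => Fin.succ_injective _ (hf h)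
    have hk1 : ∀ j : Fin r, Function.update k (f 0) false (f j.succ) = true := by
      intro j
      rw [Function.update_of_ne (fun h => (Fin.succ_ne_zero j) (hf h))]
      exact hk j.succ
    obtain ⟨ε, hε, hchain⟩ := ih _ hinj' (Function.update k (f 0) false) hk1
    refine ⟨sgn K (f 0) (Function.update k (f 0) false) * ε, ?_, ?_⟩
    · rcases sgn_pm K (f 0) (Function.update k (f 0) false) with h | h <;>
        rcases hε with h' | h' <;> simp [h, h']
    · have hstate : (fun m => if m ∈ Finset.image (fun j : Fin r => f j.succ) Finset.univ then false
          else Function.update k (f 0) false m)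
          = (fun m => if m ∈ Finset.image f Finset.univ then false else k m) := by
        funext m
        by_cases hm : m ∈ Finset.image (fun j : Fin r => f j.succ) Finset.univ
        · have hm2 : m ∈ Finset.image f Finset.univ := by
            simp only [Finset.mem_image, Finset.mem_univ, true_and] at hm ⊢
            obtain ⟨j, hj⟩ := hm; exact ⟨j.succ, hj⟩
          simp [hm, hm2]
        · by_cases hm0 : m = f 0
          · subst hm0
            have hm2 : f 0 ∈ Finset.image f Finset.univ := by
              simp [Finset.mem_image]
            simp [hm, hm2]
          · have hm2 : m ∉ Finset.image f Finset.univ := by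
              simp only [Finset.mem_image, Finset.mem_univ, true_and] at hm ⊢
              rintro ⟨j, rfl⟩
              rcases Fin.eq_zero_or_eq_succ j with rfl | ⟨j', rfl⟩
              · exact hm0 rfl
              · exact hm ⟨j', rfl⟩
            simp [hm, hm2, Function.update_of_ne hm0]
      rw [hstate] at hchain
      rw [List.ofFn_succ, List.reverse_cons, List.prod_append, List.prod_singleton,
        Module.End.mul_apply, annOp_eVec, if_pos h0, map_smul, hchain, smul_smul]

lemma cre_chain (K : ℕ) : ∀ (r : ℕ) (f : Fin r → Fin K), Function.Injective f →
    ∀ (k : Fin K → Bool), (∀ j, k (f j) = false) →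
    ∃ ε : ℝ, (ε = 1 ∨ ε = -1) ∧
      (List.ofFn fun j => creOp K (f j)).prod (eVec K k)
        = ε • eVec K (fun m => if m ∈ Finset.image f Finset.univ then true else k m) := by
  intro r
  induction r with
  | zero =>
    intro f _ k _
    refine ⟨1, Or.inl rfl, ?_⟩
    have hstate : (fun m => if m ∈ Finset.image f Finset.univ then true else k m) = k := by
      funext m; simp
    simp [hstate]
  | succ r ih =>
    intro f hf k hk
    have hinj' : Function.Injective (fun j : Fin r => f j.succ) :=
      fun a b h => Fin.succ_injective _ (hf h)
    obtain ⟨ε, hε, hchain⟩ := ih _ hinj' k (fun j => hk j.succ)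
    set k1 : Fin K → Bool := fun m =>
      if m ∈ Finset.image (fun j : Fin r => f j.succ) Finset.univ then true else k m with hk1def
    have hf0 : k1 (f 0) = false := by
      rw [hk1def]
      have : f 0 ∉ Finset.image (fun j : Fin r => f j.succ) Finset.univ := by
        simp only [Finset.mem_image, Finset.mem_univ, true_and]
        rintro ⟨j, hj⟩
        exact (Fin.succ_ne_zero j) (hf hj)
      simp [this, hk 0]
    refine ⟨sgn K (f 0) k1 * ε, ?_, ?_⟩
    · rcases sgn_pm K (f 0) k1 with h | h <;> rcases hε with h' | h' <;> simp [h, h']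
    · have hstate : Function.update k1 (f 0) true
          = (fun m => if m ∈ Finset.image f Finset.univ then true else k m) := by
        funext m
        by_cases hm0 : m = f 0
        · subst hm0
          have hm2 : f 0 ∈ Finset.image f Finset.univ := by simp [Finset.mem_image]
          simp [hm2, Function.update_self]
        · rw [Function.update_of_ne hm0, hk1def]
          by_cases hm : m ∈ Finset.image (fun j : Fin r => f j.succ) Finset.univ
          · have hm2 : m ∈ Finset.image f Finset.univ := by
              simp only [Finset.mem_image, Finset.mem_univ, true_and] at hm ⊢
              obtain ⟨j, hj⟩ := hm; exact ⟨j.succ, hj⟩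
            simp [hm, hm2]
          · have hm2 : m ∉ Finset.image f Finset.univ := by
              simp only [Finset.mem_image, Finset.mem_univ, true_and] at hm ⊢
              rintro ⟨j, rfl⟩
              rcases Fin.eq_zero_or_eq_succ j with rfl | ⟨j', rfl⟩
              · exact hm0 rfl
              · exact hm ⟨j', rfl⟩
            simp [hm, hm2]
      rw [List.ofFn_succ, List.prod_cons, Module.End.mul_apply, hchain, map_smul,
        creOp_eVec, hf0, if_neg (by simp), hstate, smul_smul, mul_comm ε]

/-- The occupation state produced by applying `excOp μ` to the reference. -/
def exState (K N : ℕ) (μ : ExIdx K N) : Fin K → Bool := fun m =>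
  if m ∈ Finset.image μ.vir Finset.univ then true
  else if m ∈ Finset.image μ.occ Finset.univ then false
  else refOcc K N m

lemma excOp_refVec (K N : ℕ) (μ : ExIdx K N) :
    ∃ ε : ℝ, (ε = 1 ∨ ε = -1) ∧
      excOp K N μ (refVec K N) = ε • eVec K (exState K N μ) := by
  have hocc : ∀ j, refOcc K N (μ.occ j) = true := by
    intro j; simp [refOcc, μ.occ_lt j]
  obtain ⟨ε₁, hε₁, h1⟩ := ann_chain K μ.r μ.occ μ.occ_mono.injective (refOcc K N) hocc
  set k1 : Fin K → Bool :=
    fun m => if m ∈ Finset.image μ.occ Finset.univ then false else refOcc K N m with hk1def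
  have hvir : ∀ j, k1 (μ.vir j) = false := by
    intro j
    have h2 : μ.vir j ∉ Finset.image μ.occ Finset.univ := by
      simp only [Finset.mem_image, Finset.mem_univ, true_and]
      rintro ⟨j', hj'⟩
      have := μ.occ_lt j'
      have := μ.vir_ge j
      omega
    have h3 : refOcc K N (μ.vir j) = false := by
      simp only [refOcc, decide_eq_false_iff_not, not_lt]
      exact μ.vir_ge j
    simp [hk1def, h2, h3]
  obtain ⟨ε₂, hε₂, h2⟩ := cre_chain K μ.r μ.vir μ.vir_mono.injective k1 hvir
  refine ⟨ε₂ * ε₁, by rcases hε₁ with h|h <;> rcases hε₂ with h'|h' <;> simp [h,h'], ?_⟩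
  have hstate : (fun m => if m ∈ Finset.image μ.vir Finset.univ then true else k1 m)
      = exState K N μ := by
    funext m
    simp [exState, hk1def]
  rw [excOp, Module.End.mul_apply, refVec, h1, map_smul, h2, hstate, smul_smul, mul_comm ε₁]

lemma mem_occ_image (K N : ℕ) (μ : ExIdx K N) (m : Fin K) (hm : (m : ℕ) < N) :
    m ∈ Finset.image μ.occ Finset.univ ↔ exState K N μ m = false := by
  have hv : m ∉ Finset.image μ.vir Finset.univ := by
    simp only [Finset.mem_image, Finset.mem_univ, true_and]
    rintro ⟨j, rfl⟩
    exact absurd hm (by have := μ.vir_ge j; omega)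
  unfold exState
  rw [if_neg hv]
  by_cases ho : m ∈ Finset.image μ.occ Finset.univ
  · simp [ho]
  · simp [ho, refOcc, hm]

lemma mem_vir_image (K N : ℕ) (μ : ExIdx K N) (m : Fin K) (hm : N ≤ (m : ℕ)) :
    m ∈ Finset.image μ.vir Finset.univ ↔ exState K N μ m = true := by
  unfold exState
  by_cases hv : m ∈ Finset.image μ.vir Finset.univ
  · simp [hv]
  · have ho : m ∉ Finset.image μ.occ Finset.univ := by
      simp only [Finset.mem_image, Finset.mem_univ, true_and]
      rintro ⟨j, rfl⟩
      exact absurd hm (by have := μ.occ_lt j; omega)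
    simp [hv, ho, refOcc]
    omega

lemma occ_image_lt (K N : ℕ) (μ : ExIdx K N) (m : Fin K)
    (hm : m ∈ Finset.image μ.occ Finset.univ) : (m : ℕ) < N := by
  simp only [Finset.mem_image, Finset.mem_univ, true_and] at hm
  obtain ⟨j, rfl⟩ := hm
  exact μ.occ_lt j

lemma vir_image_ge (K N : ℕ) (μ : ExIdx K N) (m : Fin K)
    (hm : m ∈ Finset.image μ.vir Finset.univ) : N ≤ (m : ℕ) := by
  simp only [Finset.mem_image, Finset.mem_univ, true_and] at hm
  obtain ⟨j, rfl⟩ := hm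
  exact μ.vir_ge j

lemma exState_injective (K N : ℕ) : Function.Injective (exState K N) := by
  intro μ μ' h
  have hoccset : Finset.image μ.occ Finset.univ = Finset.image μ'.occ Finset.univ := by
    ext m
    by_cases hm : (m : ℕ) < N
    · rw [mem_occ_image K N μ m hm, mem_occ_image K N μ' m hm, h]
    · exact iff_of_false (fun hc => hm (occ_image_lt K N μ m hc))
        (fun hc => hm (occ_image_lt K N μ' m hc))
  have hvirset : Finset.image μ.vir Finset.univ = Finset.image μ'.vir Finset.univ := by
    ext m
    by_cases hm : N ≤ (m : ℕ)
    · rw [mem_vir_image K N μ m hm, mem_vir_image K N μ' m hm, h]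
    · exact iff_of_false (fun hc => hm (vir_image_ge K N μ m hc))
        (fun hc => hm (vir_image_ge K N μ' m hc))
  obtain ⟨r, hp1, hp2, occ, vir, hom, hvm, hol, hvg⟩ := μ
  obtain ⟨r', hp1', hp2', occ', vir', hom', hvm', hol', hvg'⟩ := μ'
  simp only at hoccset hvirset
  have e1 : (Finset.image occ Finset.univ).card = r := by
    rw [Finset.card_image_of_injective _ hom.injective, Finset.card_univ, Fintype.card_fin]
  have e1' : (Finset.image occ' Finset.univ).card = r' := by
    rw [Finset.card_image_of_injective _ hom'.injective, Finset.card_univ, Fintype.card_fin]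
  have hr : r = r' := by rw [← e1, hoccset, e1']
  subst hr
  have hocc_eq : occ = occ' :=
    (Finset.orderEmbOfFin_unique e1
        (fun x => Finset.mem_image_of_mem _ (Finset.mem_univ x)) hom).trans
      (Finset.orderEmbOfFin_unique e1
        (fun x => hoccset ▸ Finset.mem_image_of_mem _ (Finset.mem_univ x)) hom').symm
  have e2 : (Finset.image vir Finset.univ).card = r := by
    rw [Finset.card_image_of_injective _ hvm.injective, Finset.card_univ, Fintype.card_fin]
  have hvir_eq : vir = vir' :=
    (Finset.orderEmbOfFin_unique e2
        (fun x => Finset.mem_image_of_mem _ (Finset.mem_univ x)) hvm).trans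
      (Finset.orderEmbOfFin_unique e2
        (fun x => hvirset ▸ Finset.mem_image_of_mem _ (Finset.mem_univ x)) hvm').symm
  subst hocc_eq
  subst hvir_eq
  rfl

lemma image_orderEmbOfFin (K : ℕ) (s : Finset (Fin K)) {r : ℕ} (h : s.card = r) :
    Finset.image ⇑(s.orderEmbOfFin h) Finset.univ = s := by
  ext m
  simp only [Finset.mem_image, Finset.mem_univ, true_and]
  constructor
  · rintro ⟨j, rfl⟩; exact Finset.orderEmbOfFin_mem s h j
  · intro hm
    have : m ∈ Set.range ⇑(s.orderEmbOfFin h) := by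
      rw [Finset.range_orderEmbOfFin]; exact hm
    exact this

lemma exists_exIdx (K N : ℕ) (hK : N ≤ K) (k : Fin K → Bool)
    (h1 : nTrue K k = N) (h2 : k ≠ refOcc K N) : ∃ μ : ExIdx K N, exState K N μ = k := by
  classical
  set O : Finset (Fin K) := Finset.univ.filter (fun j => (j : ℕ) < N ∧ k j = false) with hO
  set V : Finset (Fin K) := Finset.univ.filter (fun j => N ≤ (j : ℕ) ∧ k j = true) with hV
  set A : Finset (Fin K) := Finset.univ.filter (fun j => (j : ℕ) < N) with hA
  set T : Finset (Fin K) := Finset.univ.filter (fun j => k j = true) with hT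
  have hAcard : A.card = N := by
    have h' : A = Finset.univ.filter (fun j => refOcc K N j = true) := by
      ext j; simp [hA, refOcc]
    have h2 := nTrue_refOcc K N hK
    unfold nTrue at h2
    rw [h']
    exact h2

  have hTcard : T.card = N := h1
  have hOeq : O = A \ T := by
    ext j
    simp only [hO, hA, hT, Finset.mem_filter, Finset.mem_sdiff, Finset.mem_univ, true_and]
    constructor
    · rintro ⟨hj, hjf⟩; exact ⟨hj, by simp [hjf]⟩
    · rintro ⟨hj, hjf⟩; exact ⟨hj, by simpa using hjf⟩
  have hVeq : V = T \ A := by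
    ext j
    simp only [hV, hA, hT, Finset.mem_filter, Finset.mem_sdiff, Finset.mem_univ, true_and]
    exact ⟨fun ⟨a, b⟩ => ⟨b, by omega⟩, fun ⟨a, b⟩ => ⟨by omega, a⟩⟩
  have hcard : V.card = O.card := by
    have c1 := Finset.card_sdiff_add_card_inter A T
    have c2 := Finset.card_sdiff_add_card_inter T A
    rw [Finset.inter_comm] at c2
    rw [hOeq, hVeq]
    omega
  have hr_pos : 1 ≤ O.card := by
    rcases Nat.eq_zero_or_pos O.card with h0 | h0
    · exfalso
      apply h2
      funext j
      by_cases hj : (j : ℕ) < N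
      · have hj2 : j ∉ O := by rw [Finset.card_eq_zero.mp h0]; exact Finset.notMem_empty j
        have hkj : k j = true := by
          by_contra hc
          exact hj2 (Finset.mem_filter.mpr ⟨Finset.mem_univ j, hj, by simpa using hc⟩)
        simp [refOcc, hj, hkj]
      · have hj2 : j ∉ V := by
          rw [Finset.card_eq_zero.mp (show V.card = 0 by rw [hcard, h0])]
          exact Finset.notMem_empty j
        have hkj : k j = false := by
          by_contra hc
          exact hj2 (Finset.mem_filter.mpr ⟨Finset.mem_univ j, by omega, by simpa using hc⟩)
        simp [refOcc, hj, hkj]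
    · exact h0
  have hr_le : O.card ≤ N := by
    rw [hOeq]
    calc (A \ T).card ≤ A.card := Finset.card_le_card (Finset.sdiff_subset)
    _ = N := hAcard
  refine ⟨⟨O.card, hr_pos, hr_le, ⇑(O.orderEmbOfFin rfl), ⇑(V.orderEmbOfFin hcard),
      (O.orderEmbOfFin rfl).strictMono, (V.orderEmbOfFin hcard).strictMono,
      fun j => ?_, fun j => ?_⟩, ?_⟩
  · exact (Finset.mem_filter.mp (Finset.orderEmbOfFin_mem O rfl j)).2.1
  · exact (Finset.mem_filter.mp (Finset.orderEmbOfFin_mem V hcard j)).2.1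
  · funext m
    show (if m ∈ Finset.image (⇑(V.orderEmbOfFin hcard)) Finset.univ then true
      else if m ∈ Finset.image (⇑(O.orderEmbOfFin rfl)) Finset.univ then false
      else refOcc K N m) = k m
    rw [image_orderEmbOfFin K V hcard, image_orderEmbOfFin K O rfl]
    by_cases hmV : m ∈ V
    · rw [if_pos hmV]
      exact ((Finset.mem_filter.mp hmV).2.2).symm
    · rw [if_neg hmV]
      by_cases hmO : m ∈ O
      · rw [if_pos hmO]
        exact ((Finset.mem_filter.mp hmO).2.2).symm
      · rw [if_neg hmO]
        by_cases hm : (m : ℕ) < N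
        · have hkj : k m = true := by
            by_contra hc
            exact hmO (Finset.mem_filter.mpr ⟨Finset.mem_univ m, hm, by simpa using hc⟩)
          simp [refOcc, hm, hkj]
        · have hkj : k m = false := by
            by_contra hc
            exact hmV (Finset.mem_filter.mpr ⟨Finset.mem_univ m, by omega, by simpa using hc⟩)
          simp [refOcc, hm, hkj]

lemma eVec_mem_Hspace (K N : ℕ) (k : Fin K → Bool) (h : nTrue K k = N) :
    eVec K k ∈ Hspace K N :=
  Submodule.subset_span ⟨k, h, rfl⟩

lemma Hspace_apply_eq_zero (K N : ℕ) (f : FockSpace K) (hf : f ∈ Hspace K N)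
    (k : Fin K → Bool) (hk : nTrue K k ≠ N) : f k = 0 := by
  induction hf using Submodule.span_induction with
  | mem g hg =>
    obtain ⟨k', hk', rfl⟩ := hg
    rw [eVec_apply, if_neg (fun h => hk (by rw [h]; exact hk'))]
  | zero => rfl
  | add g h _ _ hg hh => simp [hg, hh]
  | smul c g _ hg => simp [hg]

lemma ip_refVec (K N : ℕ) (f : FockSpace K) : ip K f (refVec K N) = f (refOcc K N) := by
  unfold ip refVec eVec
  rw [Finset.sum_eq_single (refOcc K N)]
  · simp
  · intro b _ hb
    rw [Pi.single_apply, if_neg hb, mul_zero]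
  · intro h
    exact absurd (Finset.mem_univ _) h

lemma excResL_apply_val (K N : ℕ) (hX : ExcInvariant K N) (μ : ExIdx K N) (x : Hspace K N) :
    ((excResL K N hX μ x : Hspace K N) : FockSpace K) = excOp K N μ (x : FockSpace K) := by
  simp [excResL, LinearMap.restrict_coe_apply]

lemma sum_decomp (K N : ℕ) (hK : N < K) (Ψ : Hspace K N)
    (hcoord : (Ψ : FockSpace K) (refOcc K N) = 1) :
    (Ψ : FockSpace K) = refVec K N +
      ∑ x : {k : Fin K → Bool // nTrue K k = N ∧ k ≠ refOcc K N},
        ((Ψ : FockSpace K) x.1) • eVec K x.1 := by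
  classical
  have h1 : ∀ k0 : Fin K → Bool,
      ((Ψ : FockSpace K) k0) • eVec K k0 = Pi.single k0 ((Ψ : FockSpace K) k0) := by
    intro k0
    rw [eVec, ← Pi.single_smul, smul_eq_mul, mul_one]
  have hdecomp : (Ψ : FockSpace K) = ∑ k : Fin K → Bool, ((Ψ : FockSpace K) k) • eVec K k := by
    conv_lhs => rw [← Finset.univ_sum_single (Ψ : FockSpace K)]
    exact Finset.sum_congr rfl fun k _ => (h1 k).symm
  have hsub : ∑ k ∈ Finset.univ.filter (fun k => nTrue K k = N),
        ((Ψ : FockSpace K) k) • eVec K k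
      = ∑ k : Fin K → Bool, ((Ψ : FockSpace K) k) • eVec K k := by
    refine Finset.sum_subset (Finset.filter_subset _ _) fun k _ hk => ?_
    have : nTrue K k ≠ N := by
      intro h; exact hk (Finset.mem_filter.mpr ⟨Finset.mem_univ k, h⟩)
    rw [Hspace_apply_eq_zero K N _ Ψ.2 k this, zero_smul]
  have hsplit := Finset.sum_filter_add_sum_filter_not
    (Finset.univ.filter (fun k => nTrue K k = N)) (fun k => k = refOcc K N)
    (fun k => ((Ψ : FockSpace K) k) • eVec K k)
  have hone : (Finset.univ.filter (fun k => nTrue K k = N)).filter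
      (fun k => k = refOcc K N) = {refOcc K N} := by
    ext k
    simp only [Finset.mem_filter, Finset.mem_univ, true_and, Finset.mem_singleton]
    constructor
    · rintro ⟨-, h⟩; exact h
    · rintro rfl; exact ⟨nTrue_refOcc K N hK.le, rfl⟩
  have htwo : ∑ k ∈ (Finset.univ.filter (fun k => nTrue K k = N)).filter
        (fun k => ¬k = refOcc K N), ((Ψ : FockSpace K) k) • eVec K k
      = ∑ x : {k : Fin K → Bool // nTrue K k = N ∧ k ≠ refOcc K N},
        ((Ψ : FockSpace K) x.1) • eVec K x.1 := by
    rw [Finset.filter_filter]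
    exact Finset.sum_subtype _ (fun k => by simp) _
  conv_lhs => rw [hdecomp, ← hsub, ← hsplit, hone, htwo]
  rw [Finset.sum_singleton, hcoord, one_smul, refVec]

/-- every intermediately normalized wavefunction is uniquely parametrized
as Ψ = (id + C) Φ₀ with C a cluster operator. -/
theorem linear_parametrization_unique
    (K N : ℕ) (hN : 0 < N) (hK : N < K) (hX : ExcInvariant K N)
    (Ψ : Hspace K N) (hΨ : ip K (Ψ : FockSpace K) (refVec K N) = 1) :
    ∃! C : Hspace K N →L[ℝ] Hspace K N, C ∈ clusterSpace K N hX ∧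
      Ψ = (1 + C) (refState K N hK.le) := by
  classical
  have hcoord : (Ψ : FockSpace K) (refOcc K N) = 1 := by
    rw [ip_refVec] at hΨ; exact hΨ
  -- choose excitation data for every excited determinant
  have hex : ∀ x : {k : Fin K → Bool // nTrue K k = N ∧ k ≠ refOcc K N},
      ∃ με : ExIdx K N × ℝ, (με.2 = 1 ∨ με.2 = -1) ∧
        excOp K N με.1 (refVec K N) = με.2 • eVec K x.1 := by
    rintro ⟨k, h1, h2⟩
    obtain ⟨μ, hμ⟩ := exists_exIdx K N hK.le k h1 h2
    obtain ⟨ε, hε, hval⟩ := excOp_refVec K N μ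
    exact ⟨(μ, ε), hε, by rw [hval, hμ]⟩
  choose g hg1 hg2 using hex
  set C : Hspace K N →L[ℝ] Hspace K N :=
    ∑ x : {k : Fin K → Bool // nTrue K k = N ∧ k ≠ refOcc K N},
      (((Ψ : FockSpace K) x.1) * (g x).2) • excResL K N hX (g x).1 with hC
  have hCmem : C ∈ clusterSpace K N hX := by
    rw [hC]
    exact Submodule.sum_mem _ fun x _ =>
      Submodule.smul_mem _ _ (Submodule.subset_span ⟨(g x).1, rfl⟩)
  -- value of C on the reference
  have hCval : ((C (refState K N hK.le) : Hspace K N) : FockSpace K)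
      = ∑ x : {k : Fin K → Bool // nTrue K k = N ∧ k ≠ refOcc K N},
        ((Ψ : FockSpace K) x.1) • eVec K x.1 := by
    rw [hC, ContinuousLinearMap.sum_apply, Submodule.coe_sum]
    refine Finset.sum_congr rfl fun x _ => ?_
    rw [ContinuousLinearMap.smul_apply, SetLike.val_smul, excResL_apply_val]
    show _ • excOp K N (g x).1 (refVec K N) = _
    rw [hg2 x, smul_smul]
    rcases hg1 x with h | h <;> rw [h] <;> ring_nf
  have hmain : Ψ = (1 + C) (refState K N hK.le) := by
    apply Subtype.ext
    rw [ContinuousLinearMap.add_apply, ContinuousLinearMap.one_apply,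
      Submodule.coe_add, hCval]
    exact sum_decomp K N hK Ψ hcoord
  -- injectivity of evaluation at the reference on the cluster space
  have hinj : ∀ D ∈ clusterSpace K N hX, D (refState K N hK.le) = 0 → D = 0 := by
    intro D hD hD0
    choose εf hεf hvalf using excOp_refVec K N
    obtain ⟨c, hc⟩ := Finsupp.mem_span_range_iff_exists_finsupp.mp hD
    have h0 : ((D (refState K N hK.le) : Hspace K N) : FockSpace K) = 0 := by
      rw [hD0]; rfl
    rw [← hc] at h0
    rw [Finsupp.sum] at h0
    rw [ContinuousLinearMap.sum_apply, Submodule.coe_sum] at h0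
    have h1 : ∀ μ ∈ c.support,
        (((c μ • excResL K N hX μ) (refState K N hK.le) : Hspace K N) : FockSpace K)
          = c μ • (εf μ • eVec K (exState K N μ)) := by
      intro μ _
      rw [ContinuousLinearMap.smul_apply, SetLike.val_smul, excResL_apply_val]
      show _ • excOp K N μ (refVec K N) = _
      rw [hvalf μ]
    rw [Finset.sum_congr rfl h1] at h0
    have hczero : ∀ μ0 ∈ c.support, c μ0 = 0 := by
      intro μ0 hμ0
      have h2 := congrFun h0 (exState K N μ0)
      rw [Finset.sum_apply, Pi.zero_apply] at h2
      have h3 : ∀ μ ∈ c.support,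
          (c μ • εf μ • eVec K (exState K N μ)) (exState K N μ0)
            = c μ * (εf μ * (if exState K N μ0 = exState K N μ then 1 else 0)) := by
        intro μ _
        rw [Pi.smul_apply, Pi.smul_apply, eVec_apply, smul_eq_mul, smul_eq_mul]
      rw [Finset.sum_congr rfl h3] at h2
      rw [Finset.sum_eq_single_of_mem μ0 hμ0 (fun μ _ hne => by
        rw [if_neg (fun he => hne (exState_injective K N he).symm)]
        ring)] at h2
      rw [if_pos rfl, mul_one] at h2
      rcases hεf μ0 with h | h <;> rw [h] at h2 <;> simpa using h2
    have hc0 : c = 0 := by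
      ext μ
      by_cases hμ : μ ∈ c.support
      · exact hczero μ hμ
      · exact Finsupp.notMem_support_iff.mp hμ
    rw [← hc, hc0, Finsupp.sum_zero_index]
  refine ⟨C, ⟨hCmem, hmain⟩, ?_⟩
  rintro C' ⟨hC'mem, hC'eq⟩
  have hdiff : (C' - C) (refState K N hK.le) = 0 := by
    have e1 : (1 + C') (refState K N hK.le) = (1 + C) (refState K N hK.le) := by
      rw [← hC'eq, ← hmain]
    rw [ContinuousLinearMap.add_apply, ContinuousLinearMap.add_apply] at e1
    rw [ContinuousLinearMap.sub_apply, sub_eq_zero]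
    exact add_left_cancel e1
  have hsubmem : C' - C ∈ clusterSpace K N hX := by
    have h := Submodule.sub_mem (R := ℝ) (M := Hspace K N →L[ℝ] Hspace K N)
      (clusterSpace K N hX) (x := C') (y := C)
    exact h hC'mem hCmem
  exact sub_eq_zero.mp (hinj (C' - C) hsubmem hdiff)

end CC
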